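/- Let M_n(k) denote the sum of weights of k-Motzkin paths of length n, where each horizontal step carries weight k and up/down steps weight 1. Then for all i ≥ 1: ∑_{j=1}^{i} a_{i,j} · j = (k+2)^{i-1}, where a_{i,j} is the sum of weights of partial k-Motzkin paths of length i-1 ending at height j-1. -/

import Mathlib

/-- A Motzkin step: up, down, or horizontal. -/
inductive Step | U | D | H
deriving DecidableEq

instance instFintypeStep : Fintype Step :=
  ⟨{Step.U, Step.D, Step.H}, fun x => by cases x <;> simp⟩

/-- The height change of one step. -/
def Step.val : Step → ℤ
  | Step.U => 1
  | Step.D => -1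
  | Step.H => 0

/-- The weight of a step: up steps weigh `1`, down steps `t`, horizontal steps `k`. -/
def Step.wt (k t : ℕ) : Step → ℕ
  | Step.U => 1
  | Step.D => t
  | Step.H => k

/-- The height of the path `p` after its first `m` steps. -/
def pathHeight {n : ℕ} (p : Fin n → Step) (m : ℕ) : ℤ :=
  ∑ i ∈ Finset.univ.filter (fun i : Fin n => (i : ℕ) < m), (p i).val

/-- A partial Motzkin path: never goes below the x-axis. -/
def IsPartialMotzkin {n : ℕ} (p : Fin n → Step) : Prop :=
  ∀ m ≤ n, 0 ≤ pathHeight p m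

/-- A (complete) Motzkin path: never below the x-axis and ends on the x-axis. -/
def IsMotzkin {n : ℕ} (p : Fin n → Step) : Prop :=
  IsPartialMotzkin p ∧ pathHeight p n = 0

instance {n : ℕ} (p : Fin n → Step) : Decidable (IsPartialMotzkin p) :=
  Nat.decidableBallLE n _

instance {n : ℕ} (p : Fin n → Step) : Decidable (IsMotzkin p) :=
  inferInstanceAs (Decidable (_ ∧ _))

/-- The weight of a weighted Motzkin path. -/
def pathWt {n : ℕ} (k t : ℕ) (p : Fin n → Step) : ℕ := ∏ i, (p i).wt k t

/-- Sum of the weights of all `(k,t)`-Motzkin paths of length `n`. -/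
def motzkinWt (k t n : ℕ) : ℕ :=
  ∑ p ∈ Finset.univ.filter (fun p : Fin n → Step => IsMotzkin p), pathWt k t p

/-- Sum of the weights of all partial `(k,t)`-Motzkin paths of length `n`
ending at height `h`. -/
def partialWt (k t n h : ℕ) : ℕ :=
  ∑ p ∈ Finset.univ.filter
      (fun p : Fin n → Step => IsPartialMotzkin p ∧ pathHeight p n = (h : ℤ)),
    pathWt k t p

lemma pathHeight_eq_ite {n : ℕ} (p : Fin n → Step) (m : ℕ) :
    pathHeight p m = ∑ i : Fin n, if (i : ℕ) < m then (p i).val else 0 := by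
  rw [pathHeight, Finset.sum_filter]

lemma pathHeight_snoc {n : ℕ} (q : Fin n → Step) (s : Step) (m : ℕ) :
    pathHeight (Fin.snoc q s) m = pathHeight q m + if n < m then s.val else 0 := by
  rw [pathHeight_eq_ite, pathHeight_eq_ite, Fin.sum_univ_castSucc]
  simp

lemma pathHeight_of_le {n m : ℕ} (q : Fin n → Step) (h : n ≤ m) :
    pathHeight q m = pathHeight q n := by
  rw [pathHeight_eq_ite, pathHeight_eq_ite]
  refine Finset.sum_congr rfl fun i _ => ?_
  have := i.isLt
  rw [if_pos (by omega), if_pos (by omega)]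

lemma pathHeight_le {n : ℕ} (p : Fin n → Step) (m : ℕ) : pathHeight p m ≤ n := by
  rw [pathHeight_eq_ite]
  calc ∑ i : Fin n, (if (i : ℕ) < m then (p i).val else 0)
      ≤ ∑ _i : Fin n, (1 : ℤ) := by
        refine Finset.sum_le_sum fun i _ => ?_
        split
        · cases p i <;> simp [Step.val]
        · norm_num
    _ = n := by simp

lemma isPartialMotzkin_snoc {n : ℕ} (q : Fin n → Step) (s : Step) :
    IsPartialMotzkin (Fin.snoc q s) ↔ IsPartialMotzkin q ∧ 0 ≤ pathHeight q n + s.val := by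
  constructor
  · intro h
    refine ⟨fun m hm => ?_, ?_⟩
    · have := h m (le_trans hm (Nat.le_succ n))
      rwa [pathHeight_snoc, if_neg (by omega), add_zero] at this
    · have := h (n + 1) le_rfl
      rwa [pathHeight_snoc, if_pos (Nat.lt_succ_self n),
        pathHeight_of_le q (Nat.le_succ n)] at this
  · rintro ⟨h1, h2⟩ m hm
    rw [pathHeight_snoc]
    by_cases hm' : n < m
    · rw [if_pos hm', pathHeight_of_le q (by omega)]
      exact h2
    · rw [if_neg hm', add_zero]
      exact h1 m (by omega)

lemma pathWt_snoc {n : ℕ} (k t : ℕ) (q : Fin n → Step) (s : Step) :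
    pathWt k t (Fin.snoc q s) = pathWt k t q * s.wt k t := by
  rw [pathWt, Fin.prod_univ_castSucc]
  simp [pathWt]

lemma step_univ : (Finset.univ : Finset Step) = {Step.U, Step.D, Step.H} := by decide

lemma partialWt_succ (k n h : ℕ) :
    partialWt k 1 (n + 1) h =
      (if h = 0 then 0 else partialWt k 1 n (h - 1)) + partialWt k 1 n (h + 1)
        + k * partialWt k 1 n h := by
  have key : ∀ s : Step,
      (∑ q : Fin n → Step,
        if IsPartialMotzkin (Fin.snoc q s) ∧ pathHeight (Fin.snoc q s) (n + 1) = (h : ℤ)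
        then pathWt k 1 (Fin.snoc q s) else 0)
      = (∑ q ∈ Finset.univ.filter
            (fun q : Fin n → Step => IsPartialMotzkin q ∧ pathHeight q n = (h : ℤ) - s.val),
          pathWt k 1 q) * s.wt k 1 := by
    intro s
    rw [Finset.sum_mul, Finset.sum_filter]
    refine Finset.sum_congr rfl fun q _ => ?_
    rw [pathWt_snoc]
    refine if_congr ?_ rfl rfl
    rw [isPartialMotzkin_snoc, pathHeight_snoc, if_pos (Nat.lt_succ_self n),
      pathHeight_of_le q (Nat.le_succ n)]
    constructor
    · rintro ⟨⟨h1, -⟩, h3⟩; exact ⟨h1, by omega⟩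
    · rintro ⟨h1, h2⟩; exact ⟨⟨h1, by omega⟩, by omega⟩
  have expand : partialWt k 1 (n + 1) h =
      ∑ s : Step, ∑ q : Fin n → Step,
        if IsPartialMotzkin (Fin.snoc q s) ∧ pathHeight (Fin.snoc q s) (n + 1) = (h : ℤ)
        then pathWt k 1 (Fin.snoc q s) else 0 := by
    rw [partialWt, Finset.sum_filter,
      ← Equiv.sum_comp (Fin.snocEquiv (fun _ => Step)), Fintype.sum_prod_type]
    rfl
  rw [expand, step_univ]
  rw [Finset.sum_insert (by decide), Finset.sum_insert (by decide), Finset.sum_singleton]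
  rw [key, key, key]
  have hU : (∑ q ∈ Finset.univ.filter
        (fun q : Fin n → Step => IsPartialMotzkin q ∧ pathHeight q n = (h : ℤ) - Step.U.val),
      pathWt k 1 q) * Step.U.wt k 1
      = if h = 0 then 0 else partialWt k 1 n (h - 1) := by
    by_cases h0 : h = 0
    · subst h0
      rw [if_pos rfl]
      refine mul_eq_zero_of_left (Finset.sum_eq_zero fun q hq => ?_) _
      simp only [Finset.mem_filter] at hq
      have := hq.2.1 n le_rfl
      have := hq.2.2
      simp only [Step.val] at this
      omega
    · rw [if_neg h0]
      have : ((h : ℤ) - Step.U.val) = ((h - 1 : ℕ) : ℤ) := by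
        simp only [Step.val]; omega
      rw [this, Step.wt, mul_one, partialWt]
  have hD : (∑ q ∈ Finset.univ.filter
        (fun q : Fin n → Step => IsPartialMotzkin q ∧ pathHeight q n = (h : ℤ) - Step.D.val),
      pathWt k 1 q) * Step.D.wt k 1 = partialWt k 1 n (h + 1) := by
    have : ((h : ℤ) - Step.D.val) = ((h + 1 : ℕ) : ℤ) := by
      simp only [Step.val]; omega
    rw [this, Step.wt, mul_one, partialWt]
  have hH : (∑ q ∈ Finset.univ.filter
        (fun q : Fin n → Step => IsPartialMotzkin q ∧ pathHeight q n = (h : ℤ) - Step.H.val),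
      pathWt k 1 q) * Step.H.wt k 1 = k * partialWt k 1 n h := by
    have : ((h : ℤ) - Step.H.val) = (h : ℤ) := by
      simp only [Step.val]; omega
    rw [this, Step.wt, partialWt, mul_comm]
  rw [hU, hD, hH]
  omega

lemma partialWt_eq_zero (k t n h : ℕ) (hn : n < h) : partialWt k t n h = 0 := by
  rw [partialWt]
  refine Finset.sum_eq_zero fun p hp => ?_
  simp only [Finset.mem_filter] at hp
  have := pathHeight_le p n
  rw [hp.2.2] at this
  omega

lemma partialWt_zero (k t : ℕ) : partialWt k t 0 0 = 1 := by
  rw [partialWt]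
  rw [show Finset.univ.filter
      (fun p : Fin 0 → Step => IsPartialMotzkin p ∧ pathHeight p 0 = ((0 : ℕ) : ℤ))
      = Finset.univ from ?_]
  · rw [Fintype.sum_eq_single (fun i : Fin 0 => Step.U) (fun x hx => absurd (funext fun i => i.elim0) hx)]
    · rw [pathWt]; simp
  · refine Finset.filter_true_of_mem fun p _ => ?_
    constructor
    · intro m hm
      rw [pathHeight_eq_ite]
      simp
    · rw [pathHeight_eq_ite]; simp

lemma key_sum (k n : ℕ) :
    ∑ h ∈ Finset.range (n + 1), partialWt k 1 n h * (h + 1) = (k + 2) ^ n := by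
  induction n with
  | zero => simp [partialWt_zero]
  | succ n ih =>
    have expand : ∀ h ∈ Finset.range (n + 2),
        partialWt k 1 (n + 1) h * (h + 1) =
          (if h = 0 then 0 else partialWt k 1 n (h - 1)) * (h + 1)
            + partialWt k 1 n (h + 1) * (h + 1) + k * partialWt k 1 n h * (h + 1) := by
      intro h _
      rw [partialWt_succ]
      ring
    rw [Finset.sum_congr rfl expand]
    rw [Finset.sum_add_distrib, Finset.sum_add_distrib]
    have s1 : ∑ h ∈ Finset.range (n + 2),
        (if h = 0 then 0 else partialWt k 1 n (h - 1)) * (h + 1)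
        = ∑ h ∈ Finset.range (n + 1), partialWt k 1 n h * (h + 2) := by
      rw [Finset.sum_range_succ']
      simp
    have s2 : ∑ h ∈ Finset.range (n + 2), partialWt k 1 n (h + 1) * (h + 1)
        = ∑ h ∈ Finset.range (n + 1), partialWt k 1 n h * h := by
      have : ∑ h ∈ Finset.range (n + 3), partialWt k 1 n h * h
          = ∑ h ∈ Finset.range (n + 2), partialWt k 1 n (h + 1) * (h + 1) + partialWt k 1 n 0 * 0 :=
        Finset.sum_range_succ' _ _
      rw [mul_zero, add_zero] at this
      rw [← this, Finset.sum_range_succ, Finset.sum_range_succ,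
        partialWt_eq_zero k 1 n (n + 1) (by omega), partialWt_eq_zero k 1 n (n + 2) (by omega)]
      simp
    have s3 : ∑ h ∈ Finset.range (n + 2), k * partialWt k 1 n h * (h + 1)
        = ∑ h ∈ Finset.range (n + 1), k * partialWt k 1 n h * (h + 1) := by
      rw [Finset.sum_range_succ, partialWt_eq_zero k 1 n (n + 1) (by omega)]
      simp
    rw [s1, s2, s3, ← Finset.sum_add_distrib, ← Finset.sum_add_distrib]
    have : ∀ h ∈ Finset.range (n + 1),
        partialWt k 1 n h * (h + 2) + partialWt k 1 n h * h + k * partialWt k 1 n h * (h + 1)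
          = (k + 2) * (partialWt k 1 n h * (h + 1)) := by
      intro h _
      ring
    rw [Finset.sum_congr rfl this, ← Finset.mul_sum, ih, pow_succ]
    ring


/-- `∑_{j=1}^i a_{i,j} · j = (k+2)^{i-1}`, where `a_{i,j}` is the total weight of partial
`k`-Motzkin paths (horizontal weight `k`, up/down weight `1`) of length `i-1`
ending at height `j-1`. -/
theorem stmt_11 (k i : ℕ) (hi : 1 ≤ i) :
    ∑ j ∈ Finset.Icc 1 i, partialWt k 1 (i - 1) (j - 1) * j = (k + 2) ^ (i - 1) := by
  obtain ⟨n, rfl⟩ : ∃ n, i = n + 1 := ⟨i - 1, by omega⟩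
  simp only [Nat.add_sub_cancel]
  rw [← key_sum k n]
  refine Finset.sum_nbij' (fun j => j - 1) (fun h => h + 1) ?_ ?_ ?_ ?_ ?_
  · intro j hj
    simp only [Finset.mem_Icc] at hj
    simp only [Finset.mem_range]
    omega
  · intro h hh
    simp only [Finset.mem_range] at hh
    simp only [Finset.mem_Icc]
    omega
  · intro j hj
    simp only [Finset.mem_Icc] at hj
    show j - 1 + 1 = j
    omega
  · intro h _
    show h + 1 - 1 = h
    omega
  · intro j hj
    simp only [Finset.mem_Icc] at hj
    show partialWt k 1 n (j - 1) * j = partialWt k 1 n (j - 1) * (j - 1 + 1)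
    congr 1
    omega
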